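/- Success conditioning never degrades performance: ρ(π₊) ≥ ρ(π0), where ρ(π) := ℙ_{π,μ}(∃ t, Xₜ ∈ 𝒯₊). -/

import Mathlib

open MeasureTheory
open scoped ENNReal

/-- A pmf on a finite type, as a real-valued function. -/
def IsPMFOn {α : Type*} [Fintype α] (p : α → ℝ) : Prop :=
  (∀ x, 0 ≤ p x) ∧ ∑ x, p x = 1

/-- A terminated trajectory of an episodic MDP: the initial state together with the
list of (action, next-state) steps, recorded up to the first visit to a terminal
state.  Under almost-sure termination this is a faithful (countable) sample space
for the Ionescu–Tulcea law of the chain, terminal states being absorbing. -/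
structure Traj (S A : Type*) where
  init : S
  steps : List (A × S)

instance {S A : Type*} : MeasurableSpace (Traj S A) := ⊤

variable {S A : Type*}

/-- The last recorded state of a trajectory. -/
def lastState (ω : Traj S A) : S := ω.steps.foldl (fun _ p => p.2) ω.init

/-- The state `Xₜ` at time `t` (after termination the chain is absorbed, so we
return the last recorded state). -/
def stateAt (ω : Traj S A) (t : ℕ) : S :=
  (ω.init :: ω.steps.map Prod.snd).getD t (lastState ω)

/-- The action `Aₜ` at time `t`, defined (as `some a`) for `t` before the
termination time. -/
def actionAt (ω : Traj S A) (t : ℕ) : Option A := ω.steps[t]?.map Prod.fst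

/-- Probability weight of a path started at `s`: the product of the policy and
transition probabilities along the path, the path being required to stop exactly
on first reaching the terminal set `Term`. -/
def pathWeight [DecidableEq S] (Term : Finset S) (P : S → A → S → ℝ)
    (π : S → A → ℝ) : S → List (A × S) → ℝ
  | s, [] => if s ∈ Term then 1 else 0
  | s, (a, s') :: l =>
      if s ∈ Term then 0 else π s a * P s a s' * pathWeight Term P π s' l

/-- The law `ℙ_{π,μ}` of the episodic chain `X₀ ~ μ, Aₜ ~ π(·|Xₜ),
X_{t+1} ~ P(·|Xₜ,Aₜ)` with terminal set `Term`, as a measure on terminated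
trajectories.  When the chain reaches `Term` almost surely this is a probability
measure and is the (pushforward of the) Ionescu–Tulcea trajectory law. -/
noncomputable def trajMeasure [DecidableEq S] (Term : Finset S) (P : S → A → S → ℝ)
    (π : S → A → ℝ) (μ : S → ℝ) : Measure (Traj S A) :=
  Measure.sum fun ω : Traj S A =>
    ENNReal.ofReal (μ ω.init * pathWeight Term P π ω.init ω.steps) • Measure.dirac ω

/-- The success event `{∃ t, Xₜ ∈ 𝒯₊}`. -/
def SuccessEvent (Tp : Finset S) : Set (Traj S A) := {ω | ∃ t, stateAt ω t ∈ Tp}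

/-- The point mass at `s`, as an initial distribution. -/
def pointMass [DecidableEq S] (s : S) : S → ℝ := fun s' => if s' = s then 1 else 0

/-- The value `V_π(s) := ℙ_{π,s}(∃ t, Xₜ ∈ 𝒯₊)`. -/
noncomputable def Vval [DecidableEq S] (Term Tp : Finset S) (P : S → A → S → ℝ)
    (π : S → A → ℝ) (s : S) : ℝ :=
  (trajMeasure Term P π (pointMass s) (SuccessEvent Tp)).toReal

/-- The Q-value `Q_π(s,a) := Σ_{s'} P(s'|s,a)·V_π(s')`. -/
noncomputable def Qval [Fintype S] [DecidableEq S] (Term Tp : Finset S)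
    (P : S → A → S → ℝ) (π : S → A → ℝ) (s : S) (a : A) : ℝ :=
  ∑ s', P s a s' * Vval Term Tp P π s'

/-- The success-conditioned policy `π₊(a|s) := π0(a|s)·Q_{π0}(s,a)/V_{π0}(s)`. -/
noncomputable def piPlus [Fintype S] [DecidableEq S] (Term Tp : Finset S)
    (P : S → A → S → ℝ) (π0 : S → A → ℝ) : S → A → ℝ :=
  fun s a => π0 s a * Qval Term Tp P π0 s a / Vval Term Tp P π0 s

/-- The action-influence
`I(s) := Σ_a π0(a|s)·((Q_{π0}(s,a) − V_{π0}(s))/V_{π0}(s))²`. -/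
noncomputable def influence [Fintype S] [DecidableEq S] [Fintype A] (Term Tp : Finset S)
    (P : S → A → S → ℝ) (π0 : S → A → ℝ) (s : S) : ℝ :=
  ∑ a, π0 s a * ((Qval Term Tp P π0 s a - Vval Term Tp P π0 s)
      / Vval Term Tp P π0 s) ^ 2

/-- The occupancy measure `d_π(s) := Σ_{t≥0} ℙ_{π,μ}(Xₜ = s)` (in `ℝ≥0∞`). -/
noncomputable def dOcc [DecidableEq S] (Term : Finset S) (P : S → A → S → ℝ)
    (π : S → A → ℝ) (μ : S → ℝ) (s : S) : ℝ≥0∞ :=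
  ∑' t : ℕ, trajMeasure Term P π μ {ω | stateAt ω t = s}

/-- The success-conditioned occupancy
`d⁺_π(s) := 𝔼_{π,μ}[Σ_{t≥0} 1(Xₜ = s) | ∃ t, Xₜ ∈ 𝒯₊]` (in `ℝ≥0∞`). -/
noncomputable def dPlusOcc [DecidableEq S] (Term Tp : Finset S) (P : S → A → S → ℝ)
    (π : S → A → ℝ) (μ : S → ℝ) (s : S) : ℝ≥0∞ :=
  ∫⁻ ω, (∑' t : ℕ, if stateAt ω t = s then 1 else 0)
    ∂ (ProbabilityTheory.cond (trajMeasure Term P π μ) (SuccessEvent Tp))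

/-- Log-likelihood `Σ_{t<T} log π(Aₜ|Xₜ)` of the recorded path under policy `π`. -/
noncomputable def pathLogLik (π : S → A → ℝ) : S → List (A × S) → ℝ
  | _, [] => 0
  | s, (a, s') :: l => Real.log (π s a) + pathLogLik π s' l

/-- The cross-entropy loss
`ℓ(π) := 𝔼_{π0,μ}[ −Σ_{t<T} log π(Aₜ|Xₜ) | ∃ t, Xₜ ∈ 𝒯₊ ]`. -/
noncomputable def xent [DecidableEq S] (Term Tp : Finset S) (P : S → A → S → ℝ)
    (π0 : S → A → ℝ) (μ : S → ℝ) (π : S → A → ℝ) : ℝ :=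
  ∫ ω, -(pathLogLik π ω.init ω.steps)
    ∂ (ProbabilityTheory.cond (trajMeasure Term P π0 μ) (SuccessEvent Tp))

/-!
Under `π₊` the action at a nonterminal `s` is drawn from the law `π0(·|s)` size-biased by
`Q(s,·)`, and by Cauchy–Schwarz the mean of `Q(s,·)` under the size-biased law is at least its
`π0`-mean `V(s)`: indeed `V(s)² ≤ Σ_a π0(a|s) Q(s,a)²`. So `V_{π0}` is a subsolution of the
one-step equation of `π₊`, with the same values on terminal states. Iterating the inequality
`n` times bounds `V_{π0}(s)` by the success probability of `π₊` plus the probability that `π₊`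
is still running after `n` steps, and the latter tends to `0` since `π₊` terminates almost surely.
-/

open Filter Topology

theorem ENNReal.tsum_list_eq_nil_add_tsum_cons {β : Type*} (f : List β → ℝ≥0∞) :
    ∑' l, f l = f [] + ∑' x : β × List β, f (x.1 :: x.2) := by
  let e : Unit ⊕ β × List β ≃ List β :=
    { toFun := Sum.elim (fun _ => []) (fun x => x.1 :: x.2)
      invFun := fun | [] => .inl () | b :: l => .inr (b, l)
      left_inv := by rintro (_ | ⟨b, l⟩) <;> rfl
      right_inv := by rintro (_ | ⟨b, l⟩) <;> rfl }
  rw [← e.tsum_eq, ENNReal.summable.tsum_sum ENNReal.summable, tsum_fintype]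
  simp [e]

theorem IsPMFOn.mean_le_sizeBiased_mean {ι : Type*} [Fintype ι] {w x : ι → ℝ} (hw : IsPMFOn w)
    (hm : 0 < ∑ i, w i * x i) :
    ∑ i, w i * x i ≤ ∑ i, w i * x i / (∑ j, w j * x j) * x i := by
  set m := ∑ i, w i * x i
  have hCS : m ^ 2 ≤ (∑ i, w i) * ∑ i, w i * x i ^ 2 :=
    Finset.sum_sq_le_sum_mul_sum_of_sq_le_mul _ (fun i _ => hw.1 i)
      (fun i _ => mul_nonneg (hw.1 i) (sq_nonneg _)) (fun i _ => (by ring : _ = _).le)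
  rw [hw.2, one_mul] at hCS
  calc m = m ^ 2 / m := by field_simp
    _ ≤ (∑ i, w i * x i ^ 2) / m := by gcongr
    _ = ∑ i, w i * x i / m * x i := by
      rw [Finset.sum_div]
      exact Finset.sum_congr rfl fun i _ => by ring

namespace Traj

instance : DiscreteMeasurableSpace (Traj S A) := ⟨fun _ => trivial⟩

def cons (s : S) (a : A) (ω : Traj S A) : Traj S A := ⟨s, (a, ω.init) :: ω.steps⟩

theorem cons_mem_successEvent {Tp : Finset S} {s : S} {a : A} {ω : Traj S A} :
    cons s a ω ∈ SuccessEvent Tp ↔ s ∈ Tp ∨ ω ∈ SuccessEvent Tp := by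
  constructor
  · rintro ⟨_ | t, ht⟩
    · exact .inl ht
    · exact .inr ⟨t, ht⟩
  · rintro (h | ⟨t, ht⟩)
    · exact ⟨0, h⟩
    · exact ⟨t + 1, ht⟩

theorem cons_preimage_successEvent {Tp : Finset S} {s : S} (hs : s ∉ Tp) (a : A) :
    cons s a ⁻¹' SuccessEvent Tp = SuccessEvent Tp := by
  ext ω
  simp [cons_mem_successEvent, hs]

theorem cons_preimage_length_ge (s : S) (a : A) (n : ℕ) :
    cons s a ⁻¹' {ω | n + 1 ≤ ω.steps.length} = {ω | n ≤ ω.steps.length} := by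
  ext ω
  simp [cons]

theorem tendsto_measure_length_ge_atTop (ν : Measure (Traj S A)) [IsFiniteMeasure ν] :
    Tendsto (fun n => ν {ω | n ≤ ω.steps.length}) atTop (𝓝 0) := by
  have hempty : ⋂ n, {ω : Traj S A | n ≤ ω.steps.length} = ∅ :=
    Set.eq_empty_of_forall_notMem fun ω hω =>
      (Set.mem_iInter.mp hω (ω.steps.length + 1)).not_gt (Nat.lt_succ_self _)
  have h := tendsto_measure_iInter_atTop (μ := ν) (s := fun n => {ω | n ≤ ω.steps.length})
    (fun _ => MeasurableSet.of_discrete.nullMeasurableSet)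
    (fun _ _ hmn _ hω => hmn.trans hω) ⟨0, measure_ne_top ν _⟩
  rwa [hempty, measure_empty] at h

end Traj

section FirstStep

variable [DecidableEq S] {T : Finset S} {P : S → A → S → ℝ} {π : S → A → ℝ}

noncomputable def trajWeight (T : Finset S) (P : S → A → S → ℝ) (π : S → A → ℝ)
    (ω : Traj S A) : ℝ≥0∞ :=
  ENNReal.ofReal (pathWeight T P π ω.init ω.steps)

theorem trajMeasure_apply_eq_tsum {μ : S → ℝ} (hμ : ∀ s, 0 ≤ μ s) (E : Set (Traj S A)) :
    trajMeasure T P π μ E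
      = ∑' s, ENNReal.ofReal (μ s) * ∑' l, E.indicator (trajWeight T P π) ⟨s, l⟩ := by
  let e : S × List (A × S) ≃ Traj S A :=
    ⟨fun p => ⟨p.1, p.2⟩, fun ω => (ω.init, ω.steps), fun _ => rfl, fun _ => rfl⟩
  rw [trajMeasure, Measure.sum_apply _ .of_discrete, ← e.tsum_eq, ENNReal.tsum_prod']
  refine tsum_congr fun s => ?_
  rw [← ENNReal.tsum_mul_left]
  refine tsum_congr fun l => ?_
  by_cases h : (⟨s, l⟩ : Traj S A) ∈ E
  · simp [e, h, trajWeight, ENNReal.ofReal_mul (hμ s)]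
  · simp [e, h]

theorem trajMeasure_pointMass_apply (s : S) (E : Set (Traj S A)) :
    trajMeasure T P π (pointMass s) E = ∑' l, E.indicator (trajWeight T P π) ⟨s, l⟩ := by
  have hδ : ∀ u, 0 ≤ pointMass s u := fun u => by unfold pointMass; split_ifs <;> norm_num
  rw [trajMeasure_apply_eq_tsum hδ, tsum_eq_single s fun u hu => by simp [pointMass, hu]]
  simp [pointMass]

theorem trajMeasure_apply_eq_sum [Fintype S] {μ : S → ℝ} (hμ : ∀ s, 0 ≤ μ s)
    (E : Set (Traj S A)) :
    trajMeasure T P π μ E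
      = ∑ s, ENNReal.ofReal (μ s) * trajMeasure T P π (pointMass s) E := by
  simp only [trajMeasure_apply_eq_tsum hμ, trajMeasure_pointMass_apply, tsum_fintype]

theorem trajMeasure_pointMass_of_mem {s : S} (hs : s ∈ T) (E : Set (Traj S A)) :
    trajMeasure T P π (pointMass s) E = E.indicator 1 ⟨s, []⟩ := by
  rw [trajMeasure_pointMass_apply, tsum_eq_single []]
  · by_cases h : (⟨s, []⟩ : Traj S A) ∈ E <;> simp [h, trajWeight, pathWeight, hs]
  · rintro (_ | ⟨⟨a, s'⟩, l⟩) hl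
    · exact absurd rfl hl
    · by_cases h : (⟨s, (a, s') :: l⟩ : Traj S A) ∈ E <;> simp [h, trajWeight, pathWeight, hs]

/-- The Markov property at time `0`. -/
theorem trajMeasure_pointMass_of_notMem [Fintype S] [Fintype A] {s : S} (hs : s ∉ T)
    (hπ : ∀ a, 0 ≤ π s a) (hP : ∀ a s', 0 ≤ P s a s') (E : Set (Traj S A)) :
    trajMeasure T P π (pointMass s) E = ∑ a, ∑ s', ENNReal.ofReal (π s a * P s a s') *
      trajMeasure T P π (pointMass s') (Traj.cons s a ⁻¹' E) := by
  have hstep : ∀ a s' l, E.indicator (trajWeight T P π) ⟨s, (a, s') :: l⟩ =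
      ENNReal.ofReal (π s a * P s a s') *
        (Traj.cons s a ⁻¹' E).indicator (trajWeight T P π) ⟨s', l⟩ := fun a s' l => by
    by_cases h : (⟨s, (a, s') :: l⟩ : Traj S A) ∈ E
    · have h' : (⟨s', l⟩ : Traj S A) ∈ Traj.cons s a ⁻¹' E := h
      simp only [Set.indicator_of_mem h, Set.indicator_of_mem h', trajWeight, pathWeight,
        if_neg hs, ENNReal.ofReal_mul (mul_nonneg (hπ a) (hP a s'))]
    · have h' : (⟨s', l⟩ : Traj S A) ∉ Traj.cons s a ⁻¹' E := h
      simp only [Set.indicator_of_notMem h, Set.indicator_of_notMem h', mul_zero]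
  have hnil : E.indicator (trajWeight T P π) ⟨s, []⟩ = 0 := by
    by_cases h : (⟨s, []⟩ : Traj S A) ∈ E <;> simp [h, trajWeight, pathWeight, hs]
  rw [trajMeasure_pointMass_apply, ENNReal.tsum_list_eq_nil_add_tsum_cons, hnil, zero_add,
    ENNReal.tsum_prod', tsum_fintype, Fintype.sum_prod_type]
  simp only [hstep, ENNReal.tsum_mul_left, trajMeasure_pointMass_apply]

end FirstStep

section Comparison

variable [Fintype S] [DecidableEq S] [Fintype A] {T Tp : Finset S} {P : S → A → S → ℝ}
  {π : S → A → ℝ}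

theorem le_trajMeasure_success_of_le_step (hTp : Tp ⊆ T) (hπ : ∀ s ∉ T, ∀ a, 0 ≤ π s a)
    (hP : ∀ s a s', 0 ≤ P s a s') (hterm : ∀ s, trajMeasure T P π (pointMass s) Set.univ = 1)
    {f : S → ℝ≥0∞} (hf_le_one : ∀ s, f s ≤ 1)
    (hf_term : ∀ s ∈ T, f s ≤ trajMeasure T P π (pointMass s) (SuccessEvent Tp))
    (hf_step : ∀ s ∉ T, f s ≤ ∑ a, ∑ s', ENNReal.ofReal (π s a * P s a s') * f s') (s : S) :
    f s ≤ trajMeasure T P π (pointMass s) (SuccessEvent Tp) := by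
  have hbound : ∀ n s, f s ≤ trajMeasure T P π (pointMass s) (SuccessEvent Tp)
      + trajMeasure T P π (pointMass s) {ω | n ≤ ω.steps.length} := by
    intro n
    induction n with
    | zero => simpa [hterm] using fun s => (hf_le_one s).trans le_add_self
    | succ n ih =>
      intro s
      by_cases hs : s ∈ T
      · exact (hf_term s hs).trans le_self_add
      · have hfirst := trajMeasure_pointMass_of_notMem hs (hπ s hs) (hP s)
        calc f s ≤ ∑ a, ∑ s', ENNReal.ofReal (π s a * P s a s') * f s' := hf_step s hs
          _ ≤ ∑ a, ∑ s', ENNReal.ofReal (π s a * P s a s') *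
                (trajMeasure T P π (pointMass s') (SuccessEvent Tp)
                  + trajMeasure T P π (pointMass s') {ω | n ≤ ω.steps.length}) := by
            gcongr with a _ s' _
            exact ih s'
          _ = _ := by
            simp only [hfirst, mul_add, Finset.sum_add_distrib, Traj.cons_preimage_length_ge,
              Traj.cons_preimage_successEvent fun h => hs (hTp h)]
  have : IsFiniteMeasure (trajMeasure T P π (pointMass s)) := ⟨by simp [hterm s]⟩
  simpa using ge_of_tendsto' (tendsto_const_nhds.add
    (Traj.tendsto_measure_length_ge_atTop (trajMeasure T P π (pointMass s)))) (hbound · s)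

end Comparison

section Value

variable [DecidableEq S] {T Tp : Finset S} {P : S → A → S → ℝ} {π : S → A → ℝ} {s : S}

theorem Vval_nonneg : 0 ≤ Vval T Tp P π s := ENNReal.toReal_nonneg

theorem ofReal_Vval (hterm : ∀ s, trajMeasure T P π (pointMass s) Set.univ = 1) (s : S) :
    ENNReal.ofReal (Vval T Tp P π s) = trajMeasure T P π (pointMass s) (SuccessEvent Tp) :=
  ENNReal.ofReal_toReal <|
    ne_top_of_le_ne_top (by simp [hterm s]) (measure_mono (Set.subset_univ _))

variable [Fintype S]

theorem Qval_nonneg {a : A} (hP : ∀ s', 0 ≤ P s a s') : 0 ≤ Qval T Tp P π s a :=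
  Finset.sum_nonneg fun s' _ => mul_nonneg (hP s') Vval_nonneg

variable [Fintype A]

theorem ofReal_sum_mul_Qval (hP : ∀ a s', 0 ≤ P s a s')
    (hterm : ∀ s, trajMeasure T P π (pointMass s) Set.univ = 1) {w : A → ℝ}
    (hw : ∀ a, 0 ≤ w a) :
    ENNReal.ofReal (∑ a, w a * Qval T Tp P π s a) = ∑ a, ∑ s',
      ENNReal.ofReal (w a * P s a s') * trajMeasure T P π (pointMass s') (SuccessEvent Tp) := by
  rw [ENNReal.ofReal_sum_of_nonneg fun a _ => mul_nonneg (hw a) (Qval_nonneg (hP a))]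
  refine Finset.sum_congr rfl fun a _ => ?_
  rw [Qval, Finset.mul_sum, ENNReal.ofReal_sum_of_nonneg fun s' _ =>
    mul_nonneg (hw a) (mul_nonneg (hP a s') Vval_nonneg)]
  refine Finset.sum_congr rfl fun s' _ => ?_
  rw [← ofReal_Vval hterm, ← ENNReal.ofReal_mul (mul_nonneg (hw a) (hP a s')), mul_assoc]

theorem Vval_eq_sum_mul_Qval (hTp : Tp ⊆ T) (hP : ∀ a s', 0 ≤ P s a s')
    (hterm : ∀ s, trajMeasure T P π (pointMass s) Set.univ = 1) (hs : s ∉ T)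
    (hπ : ∀ a, 0 ≤ π s a) :
    Vval T Tp P π s = ∑ a, π s a * Qval T Tp P π s a := by
  rw [Vval, trajMeasure_pointMass_of_notMem hs hπ hP]
  simp only [Traj.cons_preimage_successEvent fun h => hs (hTp h)]
  rw [← ofReal_sum_mul_Qval hP hterm hπ, ENNReal.toReal_ofReal
    (Finset.sum_nonneg fun a _ => mul_nonneg (hπ a) (Qval_nonneg (hP a)))]

theorem piPlus_isPMFOn (hTp : Tp ⊆ T) (hP : ∀ a s', 0 ≤ P s a s')
    (hterm : ∀ s, trajMeasure T P π (pointMass s) Set.univ = 1) (hs : s ∉ T)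
    (hπ : IsPMFOn (π s)) (hV : 0 < Vval T Tp P π s) :
    IsPMFOn (piPlus T Tp P π s) := by
  refine ⟨fun a => div_nonneg (mul_nonneg (hπ.1 a) (Qval_nonneg (hP a))) hV.le, ?_⟩
  simp only [piPlus]
  rw [← Finset.sum_div, ← Vval_eq_sum_mul_Qval hTp hP hterm hs hπ.1, div_self hV.ne']

theorem Vval_le_sum_piPlus_mul_Qval (hTp : Tp ⊆ T) (hP : ∀ a s', 0 ≤ P s a s')
    (hterm : ∀ s, trajMeasure T P π (pointMass s) Set.univ = 1) (hs : s ∉ T)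
    (hπ : IsPMFOn (π s)) (hV : 0 < Vval T Tp P π s) :
    Vval T Tp P π s ≤ ∑ a, piPlus T Tp P π s a * Qval T Tp P π s a := by
  have hV_eq := Vval_eq_sum_mul_Qval hTp hP hterm hs hπ.1
  have h := hπ.mean_le_sizeBiased_mean (x := Qval T Tp P π s) (hV_eq ▸ hV)
  rw [← hV_eq] at h
  exact h

end Value

theorem success_conditioning_never_degrades_general
    {S A : Type*} [Fintype S] [DecidableEq S] [Fintype A]
    (T Tp Tm : Finset S) (hpart : Tp ∪ Tm = T)
    (P : S → A → S → ℝ) (hP : ∀ s a, IsPMFOn (P s a))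
    (hterm : ∀ π : S → A → ℝ, (∀ s ∉ T, IsPMFOn (π s)) →
      ∀ s : S, trajMeasure T P π (pointMass s) Set.univ = 1)
    (π0 : S → A → ℝ) (hπ0 : ∀ s ∉ T, IsPMFOn (π0 s))
    (hV0 : ∀ s ∉ T, 0 < Vval T Tp P π0 s)
    (μ : S → ℝ) (hμ : IsPMFOn μ) :
    trajMeasure T P π0 μ (SuccessEvent Tp)
      ≤ trajMeasure T P (piPlus T Tp P π0) μ (SuccessEvent Tp) := by
  have hTp : Tp ⊆ T := hpart ▸ Finset.subset_union_left
  have hP' : ∀ s a s', 0 ≤ P s a s' := fun s a => (hP s a).1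
  have hterm₀ := hterm π0 hπ0
  have hπPlus : ∀ s ∉ T, IsPMFOn (piPlus T Tp P π0 s) := fun s hs =>
    piPlus_isPMFOn hTp (hP' s) hterm₀ hs (hπ0 s hs) (hV0 s hs)
  have hle : ∀ s, trajMeasure T P π0 (pointMass s) (SuccessEvent Tp)
      ≤ trajMeasure T P (piPlus T Tp P π0) (pointMass s) (SuccessEvent Tp) := by
    refine le_trajMeasure_success_of_le_step hTp (fun s hs => (hπPlus s hs).1) hP'
      (hterm _ hπPlus) (fun s => ?_) (fun s hs => ?_) (fun s hs => ?_)
    · exact (measure_mono (Set.subset_univ _)).trans (hterm₀ s).le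
    · rw [trajMeasure_pointMass_of_mem hs, trajMeasure_pointMass_of_mem hs]
    · rw [← ofReal_Vval hterm₀, ← ofReal_sum_mul_Qval (hP' s) hterm₀ (hπPlus s hs).1]
      exact ENNReal.ofReal_le_ofReal
        (Vval_le_sum_piPlus_mul_Qval hTp (hP' s) hterm₀ hs (hπ0 s hs) (hV0 s hs))
  rw [trajMeasure_apply_eq_sum hμ.1, trajMeasure_apply_eq_sum hμ.1]
  exact Finset.sum_le_sum fun s _ => mul_le_mul_right (hle s) _

/-- **Success conditioning never degrades performance.**
Episodic-MDP setup: `S` finite with terminal set `𝒯 = 𝒯₊ ∪ 𝒯₋` (disjoint), `A`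
finite nonempty, transition kernel `P` (a pmf in its last argument) absorbing on
`𝒯`, every Markov policy reaching `𝒯` almost surely from every state, behavior
policy `π0` with `V_{π0}(s) > 0` at every nonterminal `s`, and initial
distribution `μ` supported on nonterminal states.

Then `ρ(π₊) ≥ ρ(π0)`, where `ρ(π) := ℙ_{π,μ}(∃ t, Xₜ ∈ 𝒯₊)`. -/
theorem success_conditioning_never_degrades
    {S A : Type*} [Fintype S] [DecidableEq S] [Fintype A] [Nonempty A]
    (T Tp Tm : Finset S) (hpart : Tp ∪ Tm = T) (hdisj : Disjoint Tp Tm)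
    (P : S → A → S → ℝ) (hP : ∀ s a, IsPMFOn (P s a))
    (habs : ∀ s ∈ T, ∀ a, P s a s = 1)
    (hterm : ∀ π : S → A → ℝ, (∀ s ∉ T, IsPMFOn (π s)) →
      ∀ s : S, trajMeasure T P π (pointMass s) Set.univ = 1)
    (π0 : S → A → ℝ) (hπ0 : ∀ s ∉ T, IsPMFOn (π0 s))
    (hV0 : ∀ s ∉ T, 0 < Vval T Tp P π0 s)
    (μ : S → ℝ) (hμ : IsPMFOn μ) (hμT : ∀ s ∈ T, μ s = 0) :
    trajMeasure T P π0 μ (SuccessEvent Tp)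
      ≤ trajMeasure T P (piPlus T Tp P π0) μ (SuccessEvent Tp) :=
  success_conditioning_never_degrades_general T Tp Tm hpart P hP hterm π0 hπ0 hV0 μ hμ
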